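/- Let c > 0 and let P be a c-packed polygonal curve of complexity at most k in ℝ^d. Let λ ≥ 0, Δ ≥ 0 and p ∈ ℝ^d. Then there exist at most ⌈2c⌉ points p₁*,…,p_{⌈2c⌉}* ∈ ℝ^d such that 𝓛_{λ,Δ}(P,p) is contained in the union of the closed balls of radius 5Δ centered at these points. -/

import Mathlib

/-!
Two points `q, q'` of the locus whose witnessing subcurves `P[s,t]`, `P[s',t']` overlap are
`4Δ`-close: the end of one subcurve lies in the other, so that point of `P` is `Δ`-close both to
the end of its own edge and to a point of the other edge, and both edges have length `λ`. Hence
a `4Δ`-separated subset of the locus has pairwise disjoint parameter intervals, each carrying a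
piece of `P` of length at least `λ - 2Δ` inside the ball of radius `λ + Δ` around `p`. Packedness
bounds the number `m` of such pieces by `m (λ - 2Δ) ≤ c (λ + Δ)`, so `m < 2c` once `λ > 5Δ`, and
a maximal `4Δ`-separated subset is a `4Δ`-cover by at most `⌈2c⌉` points. If `λ ≤ 5Δ`, the
locus lies in the ball of radius `5Δ` around `p`.
-/

open Set Metric Function

noncomputable section

/-- Euclidean space ℝ^d. -/
abbrev Euc (d : ℕ) := EuclideanSpace ℝ (Fin d)

/-- The polygonal curve (parametrized over `[0,1]`) obtained by concatenating the
segments between consecutive vertices `p 0, p 1, …, p n`. -/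
def curveMap {d n : ℕ} (p : Fin (n + 1) → Euc d) (t : ℝ) : Euc d :=
  if h : n = 0 then p 0
  else
    (1 - (t * n - (min ⌊t * (n : ℝ)⌋₊ (n - 1) : ℕ))) • p ⟨min ⌊t * (n : ℝ)⌋₊ (n - 1), by omega⟩
      + (t * n - (min ⌊t * (n : ℝ)⌋₊ (n - 1) : ℕ)) • p ⟨min ⌊t * (n : ℝ)⌋₊ (n - 1) + 1, by omega⟩

/-- A reparametrization: a continuous non-decreasing surjection of `[0,1]` onto itself. -/
def IsRepar (f : ℝ → ℝ) : Prop :=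
  ContinuousOn f (Icc 0 1) ∧ MonotoneOn f (Icc 0 1) ∧ f '' Icc 0 1 = Icc 0 1

/-- The (continuous) Fréchet distance between two curves `[0,1] → ℝ^d`. -/
def frechetDist {d : ℕ} (P Q : ℝ → Euc d) : ℝ :=
  sInf { r : ℝ | ∃ f g : ℝ → ℝ, IsRepar f ∧ IsRepar g ∧
    ∀ t ∈ Icc (0 : ℝ) 1, dist (P (f t)) (Q (g t)) ≤ r }

/-- The edge (segment curve) from `a` to `b`, parametrized over `[0,1]`. -/
def seg {d : ℕ} (a b : Euc d) (t : ℝ) : Euc d := (1 - t) • a + t • b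

/-- The subcurve `P[s,t]` of `P`, reparametrized over `[0,1]`. -/
def subcurve {d : ℕ} (P : ℝ → Euc d) (s t : ℝ) (u : ℝ) : Euc d := P (s + u * (t - s))

/-- All edge lengths of the polygonal curve with vertices `p` are at most `Λ`. -/
def EdgeLenLe {d n : ℕ} (p : Fin (n + 1) → Euc d) (Λ : ℝ) : Prop :=
  ∀ i : Fin n, dist (p i.castSucc) (p i.succ) ≤ Λ

/-- The vertices `p` define a `(μ,ε)`-curve: each edge length is a non-negative integer
multiple of `ε` and is at most `μ·ε`. -/
def IsMuEpsEdges {d n : ℕ} (p : Fin (n + 1) → Euc d) (μ : ℕ) (ε : ℝ) : Prop :=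
  ∀ i : Fin n, (∃ m : ℕ, dist (p i.castSucc) (p i.succ) = m * ε) ∧
    dist (p i.castSucc) (p i.succ) ≤ μ * ε

/-- The `Δ`-neighbourhood of a set `A ⊆ ℝ^d`. -/
def nbhd {d : ℕ} (A : Set (Euc d)) (Δ : ℝ) : Set (Euc d) :=
  { x | ∃ a ∈ A, dist x a ≤ Δ }

/-- The locus `L_{λ,Δ}(P,s)` of endpoints of edges of length `λ` that are within Fréchet
distance `Δ` of some subcurve of `P` starting at parameter `s`. -/
def locusStart {d n : ℕ} (P : Fin (n + 1) → Euc d) (lam Δ s : ℝ) : Set (Euc d) :=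
  { q | ∃ p : Euc d, ∃ t ∈ Icc s 1, dist p q = lam ∧
      frechetDist (subcurve (curveMap P) s t) (seg p q) ≤ Δ }

/-- The locus `𝓛_{λ,Δ}(P,p)` of endpoints of edges of length `λ` starting at `p` that are
within Fréchet distance `Δ` of some subcurve of `P`. -/
def locusPoint {d n : ℕ} (P : Fin (n + 1) → Euc d) (lam Δ : ℝ) (p : Euc d) : Set (Euc d) :=
  { q | dist p q = lam ∧ ∃ s t : ℝ, 0 ≤ s ∧ s ≤ t ∧ t ≤ 1 ∧
      frechetDist (subcurve (curveMap P) s t) (seg p q) ≤ Δ }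

/-- A curve `P : [0,1] → ℝ^d` is `c`-packed if, for every point `x` and radius `r > 0`, the
arc length of the portion of `P` inside the closed ball of radius `r` around `x` (the total
variation of `P` on the preimage of that ball) is at most `c·r`. -/
def IsCPacked {d : ℕ} (P : ℝ → Euc d) (c : ℝ) : Prop :=
  ∀ (x : Euc d) (r : ℝ), 0 < r →
    eVariationOn P (Icc 0 1 ∩ P ⁻¹' closedBall x r) ≤ ENNReal.ofReal (c * r)

open Bornology
open scoped NNReal

lemma IsRepar.mapsTo {f : ℝ → ℝ} (hf : IsRepar f) : MapsTo f (Icc 0 1) (Icc 0 1) :=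
  fun _ hx => by rw [← hf.2.2]; exact mem_image_of_mem f hx

lemma IsRepar.map_zero {f : ℝ → ℝ} (hf : IsRepar f) : f 0 = 0 := by
  obtain ⟨x, hx, hfx⟩ : (0 : ℝ) ∈ f '' Icc 0 1 := by
    rw [hf.2.2]; exact left_mem_Icc.2 zero_le_one
  have := hf.2.1 (left_mem_Icc.2 zero_le_one) hx hx.1
  linarith [(hf.mapsTo (left_mem_Icc.2 zero_le_one)).1]

lemma IsRepar.map_one {f : ℝ → ℝ} (hf : IsRepar f) : f 1 = 1 := by
  obtain ⟨x, hx, hfx⟩ : (1 : ℝ) ∈ f '' Icc 0 1 := by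
    rw [hf.2.2]; exact right_mem_Icc.2 zero_le_one
  have := hf.2.1 hx (right_mem_Icc.2 zero_le_one) hx.2
  linarith [(hf.mapsTo (right_mem_Icc.2 zero_le_one)).2]

lemma isRepar_id : IsRepar id :=
  ⟨continuousOn_id, monotoneOn_id, image_id _⟩

def frechetBounds {d : ℕ} (X Y : ℝ → Euc d) : Set ℝ :=
  { r : ℝ | ∃ f g : ℝ → ℝ, IsRepar f ∧ IsRepar g ∧
    ∀ t ∈ Icc (0 : ℝ) 1, dist (X (f t)) (Y (g t)) ≤ r }

section Frechet

variable {d : ℕ} {X Y : ℝ → Euc d}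

lemma frechetBounds_nonempty (hX : IsBounded (X '' Icc 0 1)) (hY : IsBounded (Y '' Icc 0 1)) :
    (frechetBounds X Y).Nonempty := by
  obtain ⟨C, hC⟩ := isBounded_iff.1 (hX.union hY)
  exact ⟨C, id, id, isRepar_id, isRepar_id, fun t ht =>
    hC (Or.inl (mem_image_of_mem X ht)) (Or.inr (mem_image_of_mem Y ht))⟩

lemma dist_zero_le_frechetDist (hne : (frechetBounds X Y).Nonempty) :
    dist (X 0) (Y 0) ≤ frechetDist X Y :=
  le_csInf hne fun _ ⟨_, _, hf, hg, h⟩ => by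
    simpa only [hf.map_zero, hg.map_zero] using h 0 (left_mem_Icc.2 zero_le_one)

lemma dist_one_le_frechetDist (hne : (frechetBounds X Y).Nonempty) :
    dist (X 1) (Y 1) ≤ frechetDist X Y :=
  le_csInf hne fun _ ⟨_, _, hf, hg, h⟩ => by
    simpa only [hf.map_one, hg.map_one] using h 1 (right_mem_Icc.2 zero_le_one)

lemma infDist_image_le_frechetDist (hne : (frechetBounds X Y).Nonempty) {w : ℝ}
    (hw : w ∈ Icc (0 : ℝ) 1) : infDist (X w) (Y '' Icc 0 1) ≤ frechetDist X Y := by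
  refine le_of_forall_gt fun r hr => ?_
  obtain ⟨r', ⟨f, g, hf, hg, hfg⟩, hr'⟩ := exists_lt_of_csInf_lt hne hr
  obtain ⟨w', hw', rfl⟩ : w ∈ f '' Icc 0 1 := by rwa [hf.2.2]
  calc infDist (X (f w')) (Y '' Icc 0 1) ≤ dist (X (f w')) (Y (g w')) :=
        infDist_le_dist_of_mem (mem_image_of_mem Y (hg.mapsTo hw'))
    _ ≤ r' := hfg w' hw'
    _ < r := hr'

end Frechet

@[simp]
lemma subcurve_zero {d : ℕ} (X : ℝ → Euc d) (s t : ℝ) : subcurve X s t 0 = X s := by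
  simp [subcurve]

@[simp]
lemma subcurve_one {d : ℕ} (X : ℝ → Euc d) (s t : ℝ) : subcurve X s t 1 = X t := by
  simp [subcurve]

lemma image_subcurve_Icc {d : ℕ} (X : ℝ → Euc d) {s t : ℝ} (hst : s ≤ t) :
    subcurve X s t '' Icc 0 1 = X '' Icc s t := by
  have : subcurve X s t = X ∘ AffineMap.lineMap s t := by
    ext1 u; simp [subcurve, AffineMap.lineMap_apply_ring', add_comm]
  rw [this, image_comp, ← segment_eq_image_lineMap, segment_eq_Icc hst]

lemma image_seg_Icc {d : ℕ} (a b : Euc d) : seg a b '' Icc 0 1 = segment ℝ a b :=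
  (segment_eq_image ℝ a b).symm

lemma sub_min_floor_mem_Icc {x : ℝ} {m : ℕ} (hx : x ∈ Icc 0 ((m : ℝ) + 1)) :
    x - (min ⌊x⌋₊ m : ℕ) ∈ Icc (0 : ℝ) 1 := by
  have hfloor : (⌊x⌋₊ : ℝ) ≤ x := Nat.floor_le hx.1
  rcases le_total ⌊x⌋₊ m with h | h
  · rw [min_eq_left h]
    constructor <;> linarith [Nat.lt_floor_add_one x]
  · rw [min_eq_right h]
    have : (m : ℝ) ≤ ⌊x⌋₊ := by exact_mod_cast h
    constructor <;> linarith [hx.2]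

lemma curveMap_mem_convexHull {d n : ℕ} (P : Fin (n + 1) → Euc d) {u : ℝ}
    (hu : u ∈ Icc (0 : ℝ) 1) : curveMap P u ∈ convexHull ℝ (range P) := by
  unfold curveMap
  split_ifs with hn
  · exact subset_convexHull ℝ _ (mem_range_self 0)
  · have hun : u * n ∈ Icc 0 (((n - 1 : ℕ) : ℝ) + 1) := by
      rw [Nat.cast_sub (Nat.one_le_iff_ne_zero.2 hn), Nat.cast_one, sub_add_cancel]
      exact ⟨by nlinarith [hu.1], by nlinarith [hu.2]⟩
    obtain ⟨ha₀, ha₁⟩ := sub_min_floor_mem_Icc hun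
    exact segment_subset_convexHull (mem_range_self _) (mem_range_self _)
      ⟨_, _, sub_nonneg.2 ha₁, ha₀, sub_add_cancel 1 _, rfl⟩

lemma isBounded_image_curveMap {d n : ℕ} (P : Fin (n + 1) → Euc d) :
    IsBounded (curveMap P '' Icc 0 1) :=
  (isBounded_convexHull.2 (finite_range P).isBounded).subset
    (image_subset_iff.2 fun _ hu => curveMap_mem_convexHull P hu)

lemma isCompact_segment {E : Type*} [NormedAddCommGroup E] [NormedSpace ℝ E] (x y : E) :
    IsCompact (segment ℝ x y) := by
  rw [segment_eq_image]; exact isCompact_Icc.image (by fun_prop)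

lemma dist_le_two_mul_dist_of_mem_segment {E : Type*} [NormedAddCommGroup E] [NormedSpace ℝ E]
    {p q q' y : E} (hy : y ∈ segment ℝ p q) (h : dist p q ≤ dist p q') :
    dist q q' ≤ 2 * dist y q' := by
  have hyq : dist y q ≤ dist y q' := by
    linarith [dist_add_dist_of_mem_segment hy, dist_triangle p y q']
  linarith [dist_triangle q y q', dist_comm q y]

def FrechetNearEdge {d : ℕ} (X : ℝ → Euc d) (Δ : ℝ) (p q : Euc d) (s t : ℝ) : Prop :=
  0 ≤ s ∧ s ≤ t ∧ t ≤ 1 ∧ frechetDist (subcurve X s t) (seg p q) ≤ Δ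

namespace FrechetNearEdge

variable {d : ℕ} {X : ℝ → Euc d} {Δ s t : ℝ} {p q : Euc d}

lemma frechetBounds_nonempty (hX : IsBounded (X '' Icc 0 1))
    (h : FrechetNearEdge X Δ p q s t) : (frechetBounds (subcurve X s t) (seg p q)).Nonempty := by
  obtain ⟨hs, hst, ht, -⟩ := h
  refine _root_.frechetBounds_nonempty ?_ ?_
  · rw [image_subcurve_Icc X hst]
    exact hX.subset (image_mono (Icc_subset_Icc hs ht))
  · rw [image_seg_Icc]; exact (isCompact_segment p q).isBounded

lemma dist_start_le (hX : IsBounded (X '' Icc 0 1)) (h : FrechetNearEdge X Δ p q s t) :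
    dist (X s) p ≤ Δ := by
  simpa [seg] using (dist_zero_le_frechetDist (h.frechetBounds_nonempty hX)).trans h.2.2.2

lemma dist_end_le (hX : IsBounded (X '' Icc 0 1)) (h : FrechetNearEdge X Δ p q s t) :
    dist (X t) q ≤ Δ := by
  simpa [seg] using (dist_one_le_frechetDist (h.frechetBounds_nonempty hX)).trans h.2.2.2

lemma exists_mem_segment_dist_le (hX : IsBounded (X '' Icc 0 1))
    (h : FrechetNearEdge X Δ p q s t) {u : ℝ} (hu : u ∈ Icc s t) :
    ∃ y ∈ segment ℝ p q, dist (X u) y ≤ Δ := by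
  obtain ⟨w, hw, hwu⟩ : X u ∈ subcurve X s t '' Icc 0 1 := by
    rw [image_subcurve_Icc X h.2.1]; exact mem_image_of_mem X hu
  have hinf := (infDist_image_le_frechetDist (h.frechetBounds_nonempty hX) hw).trans h.2.2.2
  rw [hwu, image_seg_Icc] at hinf
  obtain ⟨y, hy, hyu⟩ :=
    (isCompact_segment p q).exists_infDist_eq_dist ⟨p, left_mem_segment ℝ p q⟩ (X u)
  exact ⟨y, hy, hyu ▸ hinf⟩

lemma sub_two_mul_le_dist (hX : IsBounded (X '' Icc 0 1)) (h : FrechetNearEdge X Δ p q s t) :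
    dist p q - 2 * Δ ≤ dist (X s) (X t) := by
  linarith [h.dist_start_le hX, h.dist_end_le hX, dist_triangle4 p (X s) (X t) q,
    dist_comm p (X s)]

lemma dist_le_four_mul {q' : Euc d} {s' t' : ℝ} (hX : IsBounded (X '' Icc 0 1))
    (h : FrechetNearEdge X Δ p q s t) (h' : FrechetNearEdge X Δ p q' s' t')
    (hq : dist p q ≤ dist p q') (ht' : t' ∈ Icc s t) : dist q q' ≤ 4 * Δ := by
  obtain ⟨y, hy, hyt'⟩ := h.exists_mem_segment_dist_le hX ht'
  have hyq' : dist y q' ≤ 2 * Δ := by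
    linarith [dist_triangle y (X t') q', dist_comm y (X t'), h'.dist_end_le hX]
  linarith [dist_le_two_mul_dist_of_mem_segment hy hq]

end FrechetNearEdge

lemma sum_edist_le_eVariationOn {α E ι : Type*} [LinearOrder α] [PseudoEMetricSpace E]
    (f : α → E) (I : Finset ι) {s t : ι → α} {A : Set α} (hst : ∀ i ∈ I, s i ≤ t i)
    (hdisj : (I : Set ι).PairwiseDisjoint fun i => Icc (s i) (t i))
    (hA : ∀ i ∈ I, s i ∈ A ∧ t i ∈ A) :
    ∑ i ∈ I, edist (f (s i)) (f (t i)) ≤ eVariationOn f A := by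
  classical
  induction I using Finset.induction_on_max_value s generalizing A with
  | empty => simp
  | insert a I haI hmax ih =>
    have hbefore : ∀ i ∈ I, t i < s a := fun i hi => by
      by_contra! h
      exact Set.disjoint_left.1 (hdisj (Finset.mem_insert_of_mem hi) (Finset.mem_insert_self a I)
        (ne_of_mem_of_not_mem hi haI)) ⟨hmax i hi, h⟩
        (left_mem_Icc.2 (hst a (Finset.mem_insert_self a I)))
    have hrest : ∑ i ∈ I, edist (f (s i)) (f (t i)) ≤ eVariationOn f (A ∩ Iic (s a)) :=
      ih (fun i hi => hst i (Finset.mem_insert_of_mem hi))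
        (hdisj.subset (by simp))
        fun i hi => ⟨⟨(hA i (Finset.mem_insert_of_mem hi)).1,
            (hst i (Finset.mem_insert_of_mem hi)).trans (hbefore i hi).le⟩,
          ⟨(hA i (Finset.mem_insert_of_mem hi)).2, (hbefore i hi).le⟩⟩
    obtain ⟨hsa, hta⟩ := hA a (Finset.mem_insert_self a I)
    have hlast : edist (f (s a)) (f (t a)) ≤ eVariationOn f (A ∩ Ici (s a)) :=
      eVariationOn.edist_le f ⟨hsa, le_rfl⟩ ⟨hta, hst a (Finset.mem_insert_self a I)⟩
    calc ∑ i ∈ insert a I, edist (f (s i)) (f (t i))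
        ≤ eVariationOn f (A ∩ Iic (s a)) + eVariationOn f (A ∩ Ici (s a)) := by
          rw [Finset.sum_insert haI, add_comm]; exact add_le_add hrest hlast
      _ ≤ eVariationOn f (A ∩ Iic (s a) ∪ A ∩ Ici (s a)) :=
          eVariationOn.add_le_union f fun x hx y hy => hx.2.trans hy.2
      _ = eVariationOn f A := by rw [← inter_union_distrib_left, Iic_union_Ici, inter_univ]

lemma FrechetNearEdge.disjoint_Icc {d : ℕ} {X : ℝ → Euc d} {Δ s t s' t' : ℝ} {p q q' : Euc d}
    (hX : IsBounded (X '' Icc 0 1)) (h : FrechetNearEdge X Δ p q s t)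
    (h' : FrechetNearEdge X Δ p q' s' t') (hq : dist p q = dist p q') (hsep : 4 * Δ < dist q q') :
    Disjoint (Icc s t) (Icc s' t') := by
  refine Set.disjoint_left.2 fun x hx hx' => ?_
  rcases le_total t' t with ht | ht
  · exact hsep.not_ge (h.dist_le_four_mul hX h' hq.le ⟨hx.1.trans hx'.2, ht⟩)
  · exact hsep.not_ge (dist_comm q q' ▸ h'.dist_le_four_mul hX h hq.ge ⟨hx'.1.trans hx.2, ht⟩)

lemma ofReal_card_mul_le_of_subset_locusPoint {d n : ℕ} {P : Fin (n + 1) → Euc d} {c lam Δ : ℝ}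
    {p : Euc d} (hP : IsCPacked (curveMap P) c) (hpos : 0 < lam + Δ) (S : Finset (Euc d))
    (hS : ↑S ⊆ locusPoint P lam Δ p)
    (hsep : (S : Set (Euc d)).Pairwise fun x y => 4 * Δ < dist x y) :
    ENNReal.ofReal (S.card * (lam - 2 * Δ)) ≤ ENNReal.ofReal (c * (lam + Δ)) := by
  have hX := isBounded_image_curveMap P
  choose! s t hw using fun q (hq : q ∈ locusPoint P lam Δ p) => hq.2
  have hlam : ∀ q ∈ S, dist p q = lam := fun q hq => (hS hq).1
  have hnear : ∀ q ∈ S, FrechetNearEdge (curveMap P) Δ p q (s q) (t q) :=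
    fun q hq => hw q (hS hq)
  have hball : ∀ q ∈ S, s q ∈ Icc 0 1 ∩ curveMap P ⁻¹' closedBall p (lam + Δ) ∧
      t q ∈ Icc 0 1 ∩ curveMap P ⁻¹' closedBall p (lam + Δ) := by
    intro q hq
    obtain ⟨hs, hst, ht, -⟩ := hnear q hq
    refine ⟨⟨⟨hs, hst.trans ht⟩, ?_⟩, ⟨⟨hs.trans hst, ht⟩, ?_⟩⟩ <;>
      rw [mem_preimage, mem_closedBall]
    · linarith [(hnear q hq).dist_start_le hX, hlam q hq, dist_nonneg (x := p) (y := q)]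
    · linarith [(hnear q hq).dist_end_le hX, hlam q hq, dist_triangle (curveMap P (t q)) q p,
        dist_comm p q]
  calc ENNReal.ofReal (S.card * (lam - 2 * Δ))
      = ∑ _q ∈ S, ENNReal.ofReal (lam - 2 * Δ) := by
        rw [ENNReal.ofReal_mul (Nat.cast_nonneg _), ENNReal.ofReal_natCast, Finset.sum_const,
          nsmul_eq_mul]
    _ ≤ ∑ q ∈ S, edist (curveMap P (s q)) (curveMap P (t q)) :=
        Finset.sum_le_sum fun q hq => by
          rw [edist_dist, ← hlam q hq]
          exact ENNReal.ofReal_le_ofReal ((hnear q hq).sub_two_mul_le_dist hX)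
    _ ≤ eVariationOn (curveMap P) (Icc 0 1 ∩ curveMap P ⁻¹' closedBall p (lam + Δ)) :=
        sum_edist_le_eVariationOn _ S (fun q hq => (hnear q hq).2.1)
          (fun q hq q' hq' hne => (hnear q hq).disjoint_Icc hX (hnear q' hq')
            ((hlam q hq).trans (hlam q' hq').symm) (hsep hq hq' hne)) hball
    _ ≤ ENNReal.ofReal (c * (lam + Δ)) := hP p _ hpos

lemma Set.Finite.exists_fin_subset_range {X : Type*} [Nonempty X] {M : Set X} (hM : M.Finite)
    {N : ℕ} (hMN : M.ncard ≤ N) : ∃ q : Fin N → X, M ⊆ range q := by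
  obtain ⟨m, f, rfl⟩ := hM.fin_embedding
  have hmN : m ≤ N := by rwa [ncard_range_of_injective f.injective, Nat.card_fin] at hMN
  refine ⟨Function.extend (Fin.castLE hmN) f fun _ => Classical.arbitrary X, ?_⟩
  rintro _ ⟨j, rfl⟩
  exact ⟨Fin.castLE hmN j, (Fin.castLE_injective hmN).extend_apply _ _ j⟩

lemma Metric.exists_fin_isCover_of_packingNumber_le {X : Type*} [PseudoEMetricSpace X]
    [Nonempty X] {ε : ℝ≥0} {A : Set X} {N : ℕ} (h : packingNumber ε A ≤ N) :
    ∃ q : Fin N → X, IsCover ε A (range q) := by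
  have htop : packingNumber ε A ≠ ⊤ := ne_top_of_le_ne_top (ENat.natCast_ne_top N) h
  rw [← encard_maximalSeparatedSet htop, encard_le_coe_iff_finite_ncard_le] at h
  obtain ⟨q, hq⟩ := h.1.exists_fin_subset_range h.2
  exact ⟨q, (isCover_maximalSeparatedSet htop).mono hq⟩

lemma packingNumber_locusPoint_le {d n : ℕ} {P : Fin (n + 1) → Euc d} {c lam Δ : ℝ}
    {p : Euc d} (hP : IsCPacked (curveMap P) c) (hΔ : 0 ≤ Δ) (hlam : 5 * Δ < lam) :
    packingNumber (4 * Δ).toNNReal (locusPoint P lam Δ p) ≤ ⌈2 * c⌉₊ := by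
  simp only [packingNumber, iSup_le_iff]
  intro C hCL hC
  by_contra! hlt
  obtain ⟨T, hTC, hT⟩ := exists_subset_encard_eq (Order.add_one_le_of_lt hlt)
  have hTfin : T.Finite := finite_of_encard_eq_coe (k := ⌈2 * c⌉₊ + 1) (by simpa using hT)
  have hcard : (hTfin.toFinset.card : ℝ) = ⌈2 * c⌉₊ + 1 := by
    rw [hTfin.encard_eq_coe_toFinset_card] at hT
    exact_mod_cast (by exact_mod_cast hT : hTfin.toFinset.card = ⌈2 * c⌉₊ + 1)
  have hsep : (hTfin.toFinset : Set (Euc d)).Pairwise fun x y => 4 * Δ < dist x y := by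
    intro x hx y hy hxy
    have : ENNReal.ofReal (4 * Δ) < edist x y :=
      (hC.subset hTC) (by simpa using hx) (by simpa using hy) hxy
    rwa [edist_dist, ENNReal.ofReal_lt_ofReal_iff_of_nonneg (by positivity)] at this
  have hbound := ofReal_card_mul_le_of_subset_locusPoint hP (by linarith) hTfin.toFinset
    (by simpa using hTC.trans hCL) hsep
  rw [hcard, ENNReal.ofReal_le_ofReal_iff'] at hbound
  have h2c : 2 * c ≤ ⌈2 * c⌉₊ := Nat.le_ceil _
  rcases hbound with hbound | hbound <;> nlinarith

theorem locusPoint_subset_balls_cpacked_general (d n : ℕ) (c : ℝ) (hc : 0 < c)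
    (P : Fin (n + 1) → Euc d) (hP : IsCPacked (curveMap P) c)
    (lam Δ : ℝ) (hΔ : 0 ≤ Δ) (p : Euc d) :
    ∃ q : Fin ⌈2 * c⌉₊ → Euc d, locusPoint P lam Δ p ⊆ ⋃ i, closedBall (q i) (5 * Δ) := by
  rcases le_or_gt lam (5 * Δ) with hlam | hlam
  · refine ⟨fun _ => p, fun x hx => mem_iUnion.2 ⟨⟨0, Nat.ceil_pos.2 (by positivity)⟩, ?_⟩⟩
    rw [mem_closedBall, dist_comm, hx.1]
    exact hlam
  · obtain ⟨q, hq⟩ := exists_fin_isCover_of_packingNumber_le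
      (packingNumber_locusPoint_le (p := p) hP hΔ hlam)
    refine ⟨q, fun x hx => ?_⟩
    obtain ⟨_, ⟨i, rfl⟩, hxi⟩ := hq hx
    have hxi' : edist x (q i) ≤ ENNReal.ofReal (4 * Δ) := hxi
    rw [edist_dist, ENNReal.ofReal_le_ofReal_iff (by positivity)] at hxi'
    exact mem_iUnion.2 ⟨i, mem_closedBall.2 (by linarith)⟩

/-- Lemma 3.14 of the paper. For a `c`-packed polygonal curve `P` of
complexity at most `k`, the set `𝓛_{λ,Δ}(P,p)` is contained in the union of at most `⌈2c⌉`
closed balls of radius `5Δ`. -/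
theorem locusPoint_subset_balls_cpacked (d k n : ℕ) (hn : n + 1 ≤ k) (c : ℝ) (hc : 0 < c)
    (P : Fin (n + 1) → Euc d) (hP : IsCPacked (curveMap P) c)
    (lam Δ : ℝ) (hlam : 0 ≤ lam) (hΔ : 0 ≤ Δ) (p : Euc d) :
    ∃ q : Fin ⌈2 * c⌉₊ → Euc d, locusPoint P lam Δ p ⊆ ⋃ i, closedBall (q i) (5 * Δ) :=
  locusPoint_subset_balls_cpacked_general d n c hc P hP lam Δ hΔ p
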